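/- arXiv:2507.22203 — 3 statements merged into one kernel-verified Lean document; each statement's English description precedes it below -/
import Mathlib

section
/- Let D and ℓ be coprime positive integers, let χ be a Dirichlet character modulo D, and let m, n be integers. Let ℓ̄ be any integer inverse to ℓ modulo D and let D̄ be any integer inverse to D modulo ℓ. Then S_χ(m, n; Dℓ) = S_χ(mℓ̄, nℓ̄; D) · S(mD̄, nD̄; ℓ). -/
/-- The J-Bessel function `J_ν(x)`, defined for real `ν ≥ 0` and `x > 0` by
`J_ν(x) = (2(x/2)^ν / (Γ(ν+1/2)Γ(1/2))) ∫_0^{π/2} sin(θ)^{2ν} cos(x cos θ) dθ`. -/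
noncomputable def besselJ (ν x : ℝ) : ℝ :=
  2 * (x / 2) ^ ν / (Real.Gamma (ν + 1 / 2) * Real.Gamma (1 / 2)) *
    ∫ θ in (0 : ℝ)..(Real.pi / 2), Real.sin θ ^ (2 * ν) * Real.cos (x * Real.cos θ)

/-- The Kloosterman sum `S(m, n; c) = Σ_{x ∈ (ℤ/cℤ)ˣ} e((mx + n x̄)/c)`. -/
noncomputable def klSum (m n : ℤ) (c : ℕ) : ℂ :=
  ∑ x ∈ Finset.filter (fun x => Nat.Coprime x c) (Finset.range c),
    Complex.exp (2 * Real.pi * Complex.I *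
      ((m : ℂ) * (x : ℂ) + (n : ℂ) * ((((x : ZMod c)⁻¹ : ZMod c).val : ℕ) : ℂ)) / (c : ℂ))

/-- The twisted Kloosterman sum `S_χ(m, n; c) = Σ_{x ∈ (ℤ/cℤ)ˣ} χ(x mod D) e((mx + n x̄)/c)`
for a Dirichlet character `χ` mod `D`. -/
noncomputable def klSumT {D : ℕ} (χ : DirichletCharacter ℂ D) (m n : ℤ) (c : ℕ) : ℂ :=
  ∑ x ∈ Finset.filter (fun x => Nat.Coprime x c) (Finset.range c),
    χ ((x : ℕ) : ZMod D) * Complex.exp (2 * Real.pi * Complex.I *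
      ((m : ℂ) * (x : ℂ) + (n : ℂ) * ((((x : ZMod c)⁻¹ : ZMod c).val : ℕ) : ℂ)) / (c : ℂ))

/-- The quadratic Dirichlet character mod a prime `D` (the Legendre symbol `(·/D)`),
with values in `ℂ`. -/
noncomputable def omegaChar (D : ℕ) (hD : D.Prime) : DirichletCharacter ℂ D :=
  letI : Fact D.Prime := ⟨hD⟩
  (quadraticChar (ZMod D)).ringHomComp (Int.castRingHom ℂ)

/-- `φ_k(m,n) = δ_{m,n} + 2π i^k Σ_{c > 0, D ∣ c} c⁻¹ S_ω(m,n;c) J_{k-1}(4π√(mn)/c)`. -/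
noncomputable def phiK (D : ℕ) (χ : DirichletCharacter ℂ D) (k m n : ℕ) : ℂ :=
  (if m = n then 1 else 0) +
    2 * Real.pi * Complex.I ^ k *
      ∑' c : {c : ℕ // 0 < c ∧ D ∣ c},
        ((c : ℕ) : ℂ)⁻¹ * klSumT χ m n c *
          ((besselJ ((k : ℝ) - 1) (4 * Real.pi * Real.sqrt ((m : ℝ) * n) / ((c : ℕ) : ℝ)) : ℝ) : ℂ)

/-- `Ψ_k^1(D) = 2π D^{-1/2} Σ_{ℓ ≥ 1, D ∤ ℓ} ℓ^{-1/2} σ₀(ℓ) |J_{k-1}(4π/ℓ)|`. -/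
noncomputable def Psi1 (k D : ℕ) : ℝ :=
  2 * Real.pi * (D : ℝ) ^ (-(1 / 2) : ℝ) *
    ∑' ℓ : {ℓ : ℕ // 0 < ℓ ∧ ¬ D ∣ ℓ},
      ((ℓ : ℕ) : ℝ) ^ (-(1 / 2) : ℝ) * ((ℓ : ℕ).divisors.card : ℝ) *
        |besselJ ((k : ℝ) - 1) (4 * Real.pi / ((ℓ : ℕ) : ℝ))|

/-- `Ψ_k^2(D) = 2π Σ_{m ≥ 1} (Dm)^{-1/2} (√D σ₀(Dm) + σ₀(D²m)) |J_{k-1}(4π/(Dm))|`. -/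
noncomputable def Psi2 (k D : ℕ) : ℝ :=
  2 * Real.pi *
    ∑' m : ℕ+,
      ((D : ℝ) * (m : ℕ)) ^ (-(1 / 2) : ℝ) *
        (Real.sqrt D * (((D * (m : ℕ)).divisors.card : ℝ)) + ((D ^ 2 * (m : ℕ)).divisors.card : ℝ)) *
        |besselJ ((k : ℝ) - 1) (4 * Real.pi / ((D : ℝ) * (m : ℕ)))|

/-- The Riemann zeta function at a real argument. -/
noncomputable def zetaR (s : ℝ) : ℝ := (riemannZeta (s : ℂ)).re

/-!
By the Chinese remainder theorem, `x ↦ (x mod D, x mod ℓ)` identifies the units mod `Dℓ` with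
pairs of units mod `D` and mod `ℓ`, compatibly with inversion, and `χ(x)` only sees `x mod D`.
Since `ℓℓ̄ + DD̄ ≡ 1 (mod Dℓ)`, the additive character splits as
`e(y / Dℓ) = e(ℓ̄ y / D) · e(D̄ y / ℓ)`, so each term of `S_χ(m, n; Dℓ)` is the product of a term
of `S_χ(mℓ̄, nℓ̄; D)` and a term of `S(mD̄, nD̄; ℓ)`.
-/

open ZMod

theorem ZMod.sum_filter_coprime_range_eq_sum_units {M : Type*} [AddCommMonoid M] (c : ℕ)
    [NeZero c] (f : ℕ → M) :
    ∑ x ∈ Finset.filter (fun x => Nat.Coprime x c) (Finset.range c), f x =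
      ∑ u : (ZMod c)ˣ, f (u : ZMod c).val := by
  refine Finset.sum_bij' (fun x hx => unitOfCoprime x (Finset.mem_filter.mp hx).2)
    (fun u _ => (u : ZMod c).val) (fun _ _ => Finset.mem_univ _) (fun u _ => ?_)
    (fun x hx => ?_) (fun u _ => ?_) (fun x hx => ?_)
  · exact Finset.mem_filter.mpr ⟨Finset.mem_range.mpr (val_lt _), val_coe_unit_coprime u⟩
  · exact val_cast_of_lt (Finset.mem_range.mp (Finset.mem_filter.mp hx).1)
  · ext; simp
  · rw [coe_unitOfCoprime, val_cast_of_lt (Finset.mem_range.mp (Finset.mem_filter.mp hx).1)]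

theorem ZMod.stdAddChar_intCast_mul_add_mul_inv (c : ℕ) [NeZero c] (m n : ℤ) (x : ℕ) :
    stdAddChar ((m : ZMod c) * (x : ZMod c) + (n : ZMod c) * (x : ZMod c)⁻¹) =
      Complex.exp (2 * Real.pi * Complex.I *
        ((m : ℂ) * (x : ℂ) + (n : ℂ) * ((((x : ZMod c)⁻¹ : ZMod c).val : ℕ) : ℂ)) / (c : ℂ)) := by
  have h : (m : ZMod c) * (x : ZMod c) + (n : ZMod c) * (x : ZMod c)⁻¹ =
      ((m * x + n * ((x : ZMod c)⁻¹.val : ℤ) : ℤ) : ZMod c) := by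
    push_cast [natCast_val, cast_id]
    rfl
  rw [h, stdAddChar_coe]
  push_cast
  rfl

theorem klSumT_eq_sum_units {D : ℕ} (χ : DirichletCharacter ℂ D) (m n : ℤ) (c : ℕ) [NeZero c] :
    klSumT χ m n c = ∑ u : (ZMod c)ˣ, χ (cast (u : ZMod c)) *
      stdAddChar ((m : ZMod c) * (u : ZMod c) + (n : ZMod c) * ((u⁻¹ : (ZMod c)ˣ) : ZMod c)) := by
  simp only [klSumT, sum_filter_coprime_range_eq_sum_units,
    ← stdAddChar_intCast_mul_add_mul_inv, natCast_zmod_val, inv_coe_unit, cast_eq_val]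

theorem klSum_eq_sum_units (m n : ℤ) (c : ℕ) [NeZero c] :
    klSum m n c = ∑ u : (ZMod c)ˣ,
      stdAddChar ((m : ZMod c) * (u : ZMod c) + (n : ZMod c) * ((u⁻¹ : (ZMod c)ˣ) : ZMod c)) := by
  simp only [klSum, sum_filter_coprime_range_eq_sum_units,
    ← stdAddChar_intCast_mul_add_mul_inv, natCast_zmod_val, inv_coe_unit]

theorem ZMod.stdAddChar_natCast_mul {N a b : ℕ} [NeZero N] [NeZero b] (h : a * b = N) (y : ℤ) :
    stdAddChar ((a : ZMod N) * (y : ZMod N)) = stdAddChar (y : ZMod b) := by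
  subst h
  have ha : (a : ℂ) ≠ 0 := Nat.cast_ne_zero.mpr (left_ne_zero_of_mul (NeZero.ne (a * b)))
  rw [← Int.cast_natCast, ← Int.cast_mul, stdAddChar_coe, stdAddChar_coe]
  push_cast
  field_simp

theorem ZMod.stdAddChar_eq_mul_of_coprime {D ℓ : ℕ} [NeZero D] [NeZero ℓ] (hco : D.Coprime ℓ)
    {lbar Dbar : ℤ} (hlbar : (ℓ : ℤ) * lbar ≡ 1 [ZMOD D]) (hDbar : (D : ℤ) * Dbar ≡ 1 [ZMOD ℓ])
    (x : ZMod (D * ℓ)) :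
    stdAddChar x =
      stdAddChar (castHom (dvd_mul_right D ℓ) (ZMod D) x * (lbar : ZMod D)) *
        stdAddChar (castHom (dvd_mul_left ℓ D) (ZMod ℓ) x * (Dbar : ZMod ℓ)) := by
  have hunit : ((ℓ * lbar + D * Dbar : ℤ) : ZMod (D * ℓ)) = ((1 : ℤ) : ZMod (D * ℓ)) := by
    rw [intCast_eq_intCast_iff, Nat.cast_mul]
    refine (Int.modEq_and_modEq_iff_modEq_mul (by simpa using hco)).1 ⟨?_, ?_⟩
    · simpa using hlbar.add (Int.modEq_zero_iff_dvd.2 (dvd_mul_right (D : ℤ) Dbar))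
    · simpa using (Int.modEq_zero_iff_dvd.2 (dvd_mul_right (ℓ : ℤ) lbar)).add hDbar
  obtain ⟨t, rfl⟩ := intCast_surjective x
  have hx : (t : ZMod (D * ℓ)) =
      D * ((Dbar * t : ℤ) : ZMod (D * ℓ)) + ℓ * ((lbar * t : ℤ) : ZMod (D * ℓ)) := by
    push_cast at hunit ⊢
    linear_combination -(t : ZMod (D * ℓ)) * hunit
  simp only [map_intCast]
  rw [hx, AddChar.map_add_eq_mul, stdAddChar_natCast_mul rfl,
    stdAddChar_natCast_mul (mul_comm ℓ D), mul_comm]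
  push_cast
  ring_nf

def ZMod.unitsChineseRemainder {D ℓ : ℕ} (hco : D.Coprime ℓ) :
    (ZMod (D * ℓ))ˣ ≃* (ZMod D)ˣ × (ZMod ℓ)ˣ :=
  (Units.mapEquiv (chineseRemainder hco).toMulEquiv).trans MulEquiv.prodUnits

theorem ZMod.unitsChineseRemainder_apply {D ℓ : ℕ} (hco : D.Coprime ℓ) (u : (ZMod (D * ℓ))ˣ) :
    unitsChineseRemainder hco u = (Units.map (castHom (dvd_mul_right D ℓ) (ZMod D)).toMonoidHom u,
      Units.map (castHom (dvd_mul_left ℓ D) (ZMod ℓ)).toMonoidHom u) := by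
  ext <;> simp [unitsChineseRemainder, chineseRemainder, MulEquiv.prodUnits]

/-- Multiplicativity of twisted Kloosterman sums: if `gcd(D, ℓ) = 1`, `χ` is a Dirichlet
character mod `D`, `ℓ̄` is an inverse of `ℓ` mod `D` and `D̄` is an inverse of `D` mod `ℓ`,
then `S_χ(m, n; Dℓ) = S_χ(mℓ̄, nℓ̄; D) · S(mD̄, nD̄; ℓ)`. -/
theorem klSumT_mul (D ℓ : ℕ) (hD : 0 < D) (hℓ : 0 < ℓ) (hco : Nat.Coprime D ℓ)
    (χ : DirichletCharacter ℂ D) (m n lbar Dbar : ℤ)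
    (hlbar : (ℓ : ℤ) * lbar ≡ 1 [ZMOD (D : ℤ)])
    (hDbar : (D : ℤ) * Dbar ≡ 1 [ZMOD (ℓ : ℤ)]) :
    klSumT χ m n (D * ℓ) =
      klSumT χ (m * lbar) (n * lbar) D * klSum (m * Dbar) (n * Dbar) ℓ := by
  have : NeZero D := ⟨hD.ne'⟩
  have : NeZero ℓ := ⟨hℓ.ne'⟩
  rw [klSumT_eq_sum_units, klSumT_eq_sum_units, klSum_eq_sum_units, Finset.sum_mul_sum,
    ← Fintype.sum_prod_type']
  refine Fintype.sum_equiv (unitsChineseRemainder hco).toEquiv _ _ fun u => ?_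
  rw [MulEquiv.toEquiv_eq_coe, MulEquiv.coe_toEquiv, unitsChineseRemainder_apply,
    stdAddChar_eq_mul_of_coprime hco hlbar hDbar]
  simp only [Units.coe_map_inv, Units.coe_map, map_add, map_mul, map_intCast,
    RingHom.toMonoidHom_eq_coe, MonoidHom.coe_coe, castHom_apply, cast_id', id]
  rw [mul_assoc]
  push_cast
  ring_nf
end

section
/- Let D ≥ 7 be a prime with D ≡ 3 (mod 4) and let k ≥ 19 be an odd integer. Then |φ_k(1,1) − φ_k(D², 1)| > 0. -/
/-!
The diagonal terms contribute `δ_{1,1} - δ_{D²,1} = 1`, and the Kloosterman–Bessel series are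
too small to cancel it. The twisted Kloosterman sum is trivially bounded by `c`, and Wallis'
integral `∫₀^{π/2} sin^{2N} = Γ(N+1/2)Γ(1/2)/(2·N!)` turns the integral representation of `J_N`
into `|J_N(x)| ≤ |x/2|^N / N!`. Writing `c = Dj`, the Bessel argument is at most `4π/j` for both
`(m,n) = (1,1)` and `(D²,1)`, so each series is at most `(2π)^N/N! · ζ(2)`, and
`4π · (2π)^N/N! · π²/6 < 1` once `N = k - 1 ≥ 18`.
-/

open Real
open scoped Nat

theorem integral_sin_pow_two_mul_eq (n : ℕ) :
    ∫ θ in (0 : ℝ)..π / 2, sin θ ^ (2 * n) =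
      Gamma (n + 1 / 2) * Gamma (1 / 2) / (2 * n !) := by
  induction n with
  | zero =>
    rw [Nat.cast_zero, zero_add, Gamma_one_half_eq, mul_self_sqrt pi_pos.le]
    simp
  | succ n ih =>
    have hΓ : Gamma ((n + 1 : ℕ) + 1 / 2) = (n + 1 / 2) * Gamma (n + 1 / 2) := by
      rw [← Gamma_add_one (by positivity)]; push_cast; ring_nf
    rw [show 2 * (n + 1) = 2 * n + 2 by ring, integral_sin_pow, ih, hΓ, Nat.factorial_succ]
    simp only [sin_zero, cos_pi_div_two, zero_pow (by omega : 2 * n + 1 ≠ 0), zero_mul, mul_zero,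
      sub_zero, zero_div, zero_add]
    push_cast
    field_simp

theorem abs_besselJ_natCast_le (n : ℕ) (x : ℝ) : |besselJ n x| ≤ |x / 2| ^ n / n ! := by
  have hΓ : 0 < Gamma (n + 1 / 2) * Gamma (1 / 2) :=
    mul_pos (Gamma_pos_of_pos (by positivity)) (Gamma_pos_of_pos (by norm_num))
  have hsin : ∀ θ : ℝ, sin θ ^ (2 * (n : ℝ)) = sin θ ^ (2 * n) := fun θ => by
    rw [← Nat.cast_ofNat, ← Nat.cast_mul, rpow_natCast]
  have hint : ‖∫ θ in (0 : ℝ)..π / 2, sin θ ^ (2 * n) * cos (x * cos θ)‖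
      ≤ ∫ θ in (0 : ℝ)..π / 2, sin θ ^ (2 * n) := by
    refine intervalIntegral.norm_integral_le_of_norm_le (g := fun θ => sin θ ^ (2 * n))
      (by positivity) (Filter.Eventually.of_forall fun θ _ => ?_)
      ((by fun_prop : Continuous fun θ => sin θ ^ (2 * n)).intervalIntegrable _ _)
    rw [norm_mul, norm_pow, pow_mul, Real.norm_eq_abs, sq_abs, ← pow_mul]
    exact mul_le_of_le_one_right ((even_two_mul n).pow_nonneg _) (abs_cos_le_one _)
  rw [integral_sin_pow_two_mul_eq] at hint
  unfold besselJ
  simp_rw [hsin, rpow_natCast]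
  rw [abs_mul, abs_div, abs_of_pos hΓ, abs_mul, abs_pow, abs_two]
  calc 2 * |x / 2| ^ n / (Gamma (n + 1 / 2) * Gamma (1 / 2)) *
        |∫ θ in (0 : ℝ)..π / 2, sin θ ^ (2 * n) * cos (x * cos θ)|
      ≤ 2 * |x / 2| ^ n / (Gamma (n + 1 / 2) * Gamma (1 / 2)) *
        (Gamma (n + 1 / 2) * Gamma (1 / 2) / (2 * n !)) := by gcongr; exact hint
    _ = |x / 2| ^ n / n ! := by field_simp

theorem norm_klSumT_le {D : ℕ} (χ : DirichletCharacter ℂ D) (m n : ℤ) (c : ℕ) :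
    ‖klSumT χ m n c‖ ≤ c := by
  refine (norm_sum_le _ _).trans <| (Finset.sum_le_card_nsmul _ _ 1 fun x _ => ?_).trans ?_
  · rw [norm_mul, Complex.norm_exp]
    simpa using χ.norm_le_one _
  · simpa using (Finset.card_filter_le _ _).trans (Finset.card_range c).le

theorem norm_inv_mul_klSumT_mul_le {D : ℕ} (χ : DirichletCharacter ℂ D) (m n : ℤ) (c : ℕ)
    (r : ℝ) : ‖(c : ℂ)⁻¹ * klSumT χ m n c * r‖ ≤ |r| := by
  rcases c.eq_zero_or_pos with rfl | hc
  · simp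
  rw [norm_mul, norm_mul, norm_inv, Complex.norm_natCast, Complex.norm_real, Real.norm_eq_abs]
  refine mul_le_of_le_one_left (abs_nonneg r) ?_
  rw [inv_mul_le_one₀ (by positivity)]
  exact norm_klSumT_le χ m n c

def pnatEquivPosMultiples {D : ℕ} (hD : 0 < D) : ℕ+ ≃ {c : ℕ // 0 < c ∧ D ∣ c} where
  toFun j := ⟨D * j, Nat.mul_pos hD j.pos, dvd_mul_right D j⟩
  invFun c := ⟨c.1 / D, Nat.div_pos (Nat.le_of_dvd c.2.1 c.2.2) hD⟩
  left_inv _ := PNat.eq (Nat.mul_div_cancel_left _ hD)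
  right_inv c := Subtype.ext (Nat.mul_div_cancel' c.2.2)

theorem coe_pnatEquivPosMultiples_apply {D : ℕ} (hD : 0 < D) (j : ℕ+) :
    (pnatEquivPosMultiples hD j : ℕ) = D * j :=
  rfl

theorem hasSum_one_div_pnat_sq : HasSum (fun j : ℕ+ => 1 / ((j : ℕ) : ℝ) ^ 2) (π ^ 2 / 6) :=
  hasSum_pnat_iff (f := fun n : ℕ => 1 / (n : ℝ) ^ 2) |>.mpr <| by
    rw [Nat.cast_zero, zero_pow two_ne_zero, div_zero, add_zero]
    exact hasSum_zeta_two

noncomputable def kloostermanBesselSeries {D : ℕ} (χ : DirichletCharacter ℂ D) (ν : ℝ)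
    (m n : ℕ) : ℂ :=
  ∑' c : {c : ℕ // 0 < c ∧ D ∣ c},
    ((c : ℕ) : ℂ)⁻¹ * klSumT χ m n c *
      ((besselJ ν (4 * π * √((m : ℝ) * n) / ((c : ℕ) : ℝ)) : ℝ) : ℂ)

theorem phiK_eq (D : ℕ) (χ : DirichletCharacter ℂ D) (k m n : ℕ) :
    phiK D χ k m n =
      (if m = n then 1 else 0) + 2 * π * Complex.I ^ k * kloostermanBesselSeries χ (k - 1) m n :=
  rfl

theorem abs_besselJ_natCast_le_of_le {N : ℕ} (hN : 2 ≤ N) {x : ℝ} (hx₀ : 0 ≤ x) {j : ℕ}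
    (hj : 0 < j) (hx : x ≤ 4 * π / j) :
    |besselJ N x| ≤ (2 * π) ^ N / N ! * (1 / (j : ℝ) ^ 2) := by
  have hj' : (1 : ℝ) ≤ j := Nat.one_le_cast.mpr hj
  calc |besselJ N x| ≤ |x / 2| ^ N / N ! := abs_besselJ_natCast_le N x
    _ ≤ (2 * π * (1 / j)) ^ N / N ! := by
        rw [abs_of_nonneg (by positivity)]
        gcongr
        linarith [show 4 * π / j = 2 * (2 * π * (1 / j)) by ring]
    _ ≤ (2 * π) ^ N / N ! * (1 / (j : ℝ) ^ 2) := by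
        rw [mul_pow, mul_div_right_comm, one_div_pow]
        gcongr

theorem norm_kloostermanBesselSeries_le {D : ℕ} (hD : 0 < D) (χ : DirichletCharacter ℂ D)
    {N : ℕ} (hN : 2 ≤ N) {m n : ℕ} (hmn : m * n ≤ D ^ 2) :
    ‖kloostermanBesselSeries χ N m n‖ ≤ (2 * π) ^ N / N ! * (π ^ 2 / 6) := by
  rw [kloostermanBesselSeries, ← (pnatEquivPosMultiples hD).tsum_eq]
  refine tsum_of_norm_bounded (hasSum_one_div_pnat_sq.mul_left _) fun j => ?_
  refine (norm_inv_mul_klSumT_mul_le χ m n _ _).trans <|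
    abs_besselJ_natCast_le_of_le hN (by positivity) j.pos ?_
  have hsqrt : √((m : ℝ) * n) ≤ D :=
    Real.sqrt_le_iff.mpr ⟨by positivity, by exact_mod_cast hmn⟩
  have hD' : (0 : ℝ) < D := Nat.cast_pos.mpr hD
  calc 4 * π * √((m : ℝ) * n) / ((pnatEquivPosMultiples hD j : ℕ) : ℝ)
      ≤ 4 * π * D / (D * (j : ℕ)) := by
        rw [coe_pnatEquivPosMultiples_apply, Nat.cast_mul]
        gcongr
    _ = 4 * π / (j : ℕ) := by field_simp

theorem pow_div_factorial_le_of_le {a : ℝ} (ha : 0 ≤ a) {m n : ℕ} (ham : a ≤ m + 1)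
    (hmn : m ≤ n) : a ^ n / n ! ≤ a ^ m / m ! := by
  induction n, hmn using Nat.le_induction with
  | base => rfl
  | succ n hmn ih =>
    have han : a ≤ n + 1 := ham.trans (by exact_mod_cast Nat.succ_le_succ hmn)
    calc a ^ (n + 1) / (n + 1)! = a ^ n / n ! * (a / (n + 1)) := by
          rw [Nat.factorial_succ, pow_succ]; push_cast; field_simp
      _ ≤ a ^ n / n ! :=
          mul_le_of_le_one_right (by positivity) (div_le_one_of_le₀ han (by positivity))
      _ ≤ a ^ m / m ! := ih

theorem four_pi_mul_two_pi_pow_div_factorial_lt_one :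
    4 * π * ((2 * π) ^ 18 / 18 ! * (π ^ 2 / 6)) < 1 :=
  calc 4 * π * ((2 * π) ^ 18 / 18 ! * (π ^ 2 / 6) : ℝ)
      = π ^ 21 * (2 ^ 19 / (3 * 18 ! : ℝ)) := by ring
    _ < 3.15 ^ 21 * (2 ^ 19 / (3 * 18 ! : ℝ)) := by gcongr; exact pi_lt_d2
    _ < 1 := by norm_num [Nat.factorial]

theorem abs_phiK_sub_pos_of_19_le_general (D : ℕ) (hD : D.Prime) (k : ℕ) (hk : 19 ≤ k) :
    0 < ‖phiK D (omegaChar D hD) k 1 1 - phiK D (omegaChar D hD) k (D ^ 2) 1‖ := by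
  set S := kloostermanBesselSeries (omegaChar D hD) (k - 1)
  set B := (2 * π) ^ (k - 1) / (k - 1)! * (π ^ 2 / 6)
  have hkN : (k : ℝ) - 1 = (k - 1 : ℕ) := by rw [Nat.cast_sub (by omega), Nat.cast_one]
  have hS : ∀ m n : ℕ, m * n ≤ D ^ 2 → ‖S m n‖ ≤ B := fun m n hmn => by
    simpa only [S, hkN] using norm_kloostermanBesselSeries_le hD.pos _ (by omega) hmn
  have hB : 4 * π * B < 1 := by
    refine lt_of_le_of_lt ?_ four_pi_mul_two_pi_pow_div_factorial_lt_one
    gcongr 4 * π * (?_ * _)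
    exact pow_div_factorial_le_of_le (by positivity) (by push_cast; linarith [pi_lt_d2]) (by omega)
  have hD2 : 1 < D ^ 2 := Nat.one_lt_pow two_ne_zero hD.one_lt
  set w := 2 * π * Complex.I ^ k * (S 1 1 - S (D ^ 2) 1)
  have hw : ‖w‖ ≤ 2 * π * (B + B) := by
    simp only [w, norm_mul, Complex.norm_I, norm_pow, one_pow, mul_one, Complex.norm_real,
      Complex.norm_two, Real.norm_of_nonneg pi_pos.le]
    gcongr
    exact (norm_sub_le _ _).trans
      (add_le_add (hS 1 1 (by rw [one_mul]; exact hD2.le)) (hS _ _ (mul_one _).le))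
  have hsplit : phiK D (omegaChar D hD) k 1 1 - phiK D (omegaChar D hD) k (D ^ 2) 1 = 1 + w := by
    rw [phiK_eq, phiK_eq, if_pos rfl, if_neg hD2.ne']
    ring
  rw [hsplit]
  calc (0 : ℝ) < 1 - ‖w‖ := by linarith
    _ ≤ ‖1 + w‖ := by simpa using norm_sub_norm_le (1 : ℂ) (-w)

/-- For a prime `D ≥ 7` with `D ≡ 3 (mod 4)` and an odd integer `k ≥ 19`:
`|φ_k(1,1) − φ_k(D²,1)| > 0`. -/
theorem abs_phiK_sub_pos_of_19_le (D : ℕ) (hD : D.Prime) (hD7 : 7 ≤ D) (hD4 : D % 4 = 3)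
    (k : ℕ) (hk : 19 ≤ k) (hkodd : Odd k) :
    0 < ‖phiK D (omegaChar D hD) k 1 1 - phiK D (omegaChar D hD) k (D ^ 2) 1‖ :=
  abs_phiK_sub_pos_of_19_le_general D hD k hk
end

section
/- For every integer k ≥ 3 and every positive integer D, one has Ψ_k^1(D) ≤ (2π)^k · √π · ζ(k − 1/2)² / (√D · Γ(k − 1/2)), where ζ is the Riemann zeta function and Γ is the Gamma function. -/
/-! The integral representation gives `|J_ν(x)| ≤ √π (x/2)^ν / Γ(ν + 1/2)`, so the `ℓ`-th term of
`Ψ_k^1(D)` is at most `√π (2π)^(k-1) / Γ(k - 1/2) · σ₀(ℓ) ℓ^(-(k - 1/2))`. Dropping the condition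
`D ∤ ℓ`, these majorants sum to the Dirichlet series of `σ₀ = 1 ⋆ 1` at `k - 1/2`, which is
`ζ(k - 1/2)²`. -/

open Real

lemma abs_integral_sin_rpow_mul_cos_le {ν : ℝ} (hν : 0 ≤ ν) (x : ℝ) :
    |∫ θ in (0 : ℝ)..(π / 2), sin θ ^ (2 * ν) * cos (x * cos θ)| ≤ π / 2 := by
  have hπ : 0 ≤ π / 2 := by positivity
  have h := intervalIntegral.norm_integral_le_of_norm_le_const (C := 1) (a := 0) (b := π / 2)
    (f := fun θ => sin θ ^ (2 * ν) * cos (x * cos θ)) fun θ hθ => ?_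
  · simpa [abs_of_nonneg hπ] using h
  rw [Set.uIoc_of_le hπ] at hθ
  have hsin : 0 ≤ sin θ := sin_nonneg_of_nonneg_of_le_pi hθ.1.le (by linarith [hθ.2, pi_pos])
  rw [norm_mul, norm_of_nonneg (rpow_nonneg hsin _), Real.norm_eq_abs]
  exact mul_le_one₀ (rpow_le_one hsin (sin_le_one θ) (by linarith)) (abs_nonneg _)
    (abs_cos_le_one _)

lemma abs_besselJ_le {ν x : ℝ} (hν : 0 ≤ ν) (hx : 0 ≤ x) :
    |besselJ ν x| ≤ √π * (x / 2) ^ ν / Gamma (ν + 1 / 2) := by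
  have hΓ : 0 < Gamma (ν + 1 / 2) := Gamma_pos_of_pos (by linarith)
  have hc : 0 ≤ 2 * (x / 2) ^ ν / (Gamma (ν + 1 / 2) * Gamma (1 / 2)) := by
    rw [Gamma_one_half_eq]; positivity
  calc |besselJ ν x| ≤ 2 * (x / 2) ^ ν / (Gamma (ν + 1 / 2) * Gamma (1 / 2)) * (π / 2) := by
        rw [besselJ, abs_mul, abs_of_nonneg hc]
        exact mul_le_mul_of_nonneg_left (abs_integral_sin_rpow_mul_cos_le hν x) hc
    _ = √π * (x / 2) ^ ν / Gamma (ν + 1 / 2) := by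
        rw [Gamma_one_half_eq]
        field_simp
        rw [sq_sqrt pi_pos.le]

lemma abs_besselJ_four_pi_div_le {ν ℓ : ℝ} (hν : 0 ≤ ν) (hℓ : 0 < ℓ) :
    |besselJ ν (4 * π / ℓ)| ≤ √π * (2 * π) ^ ν / Gamma (ν + 1 / 2) * ℓ ^ (-ν) := by
  calc |besselJ ν (4 * π / ℓ)| ≤ √π * (4 * π / ℓ / 2) ^ ν / Gamma (ν + 1 / 2) :=
        abs_besselJ_le hν (by positivity)
    _ = √π * (2 * π) ^ ν / Gamma (ν + 1 / 2) * ℓ ^ (-ν) := by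
        rw [show 4 * π / ℓ / 2 = 2 * π / ℓ by ring, div_rpow (by positivity) hℓ.le,
          rpow_neg hℓ.le]
        ring

lemma rpow_neg_half_mul_abs_besselJ_le {ν ℓ d : ℝ} (hν : 0 ≤ ν) (hℓ : 0 < ℓ) (hd : 0 ≤ d) :
    ℓ ^ (-(1 / 2) : ℝ) * d * |besselJ ν (4 * π / ℓ)| ≤
      √π * (2 * π) ^ ν / Gamma (ν + 1 / 2) * (d * ℓ ^ (-(ν + 1 / 2))) :=
  calc ℓ ^ (-(1 / 2) : ℝ) * d * |besselJ ν (4 * π / ℓ)|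
      ≤ ℓ ^ (-(1 / 2) : ℝ) * d * (√π * (2 * π) ^ ν / Gamma (ν + 1 / 2) * ℓ ^ (-ν)) := by
        gcongr; exact abs_besselJ_four_pi_div_le hν hℓ
    _ = √π * (2 * π) ^ ν / Gamma (ν + 1 / 2) * (d * ℓ ^ (-(ν + 1 / 2))) := by
        rw [neg_add, rpow_add hℓ]; ring

lemma LSeriesHasSum_card_divisors {s : ℂ} (hs : 1 < s.re) :
    LSeriesHasSum (fun n => (n.divisors.card : ℂ)) s (riemannZeta s ^ 2) := by
  have h := (LSeriesHasSum_one hs).convolution (LSeriesHasSum_one hs)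
  rw [LSeries.convolution_def, ← sq] at h
  convert h using 2 with n
  rw [← Nat.map_div_right_divisors, Finset.sum_map]
  simp

lemma LSeries.term_ofReal (f : ℕ → ℝ) {s : ℝ} (hs : s ≠ 0) (n : ℕ) :
    LSeries.term (fun n => (f n : ℂ)) s n = ((f n * (n : ℝ) ^ (-s) : ℝ) : ℂ) := by
  rw [LSeries.term_of_ne_zero' (by exact_mod_cast hs), Complex.ofReal_mul,
    Complex.ofReal_cpow n.cast_nonneg, Complex.ofReal_neg, Complex.cpow_neg, div_eq_mul_inv]
  simp

lemma riemannZeta_ofReal_eq_zetaR {s : ℝ} (hs : 1 < s) : riemannZeta s = (zetaR s : ℂ) :=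
  Complex.ext (by simp [zetaR]) (by simp [riemannZeta_im_eq_zero_of_one_lt hs])

lemma hasSum_card_divisors_mul_rpow_neg {s : ℝ} (hs : 1 < s) :
    HasSum (fun n : ℕ => (n.divisors.card : ℝ) * (n : ℝ) ^ (-s)) (zetaR s ^ 2) := by
  have hterm : LSeries.term (fun n => (n.divisors.card : ℂ)) s =
      fun n : ℕ => (((n.divisors.card : ℝ) * (n : ℝ) ^ (-s) : ℝ) : ℂ) :=
    funext fun n => by
      simpa using LSeries.term_ofReal (fun n => (n.divisors.card : ℝ)) (by linarith) n
  have h := LSeriesHasSum_card_divisors (s := s) (by simpa using hs)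
  rwa [LSeriesHasSum, hterm, riemannZeta_ofReal_eq_zetaR hs, ← Complex.ofReal_pow,
    Complex.hasSum_ofReal] at h

lemma tsum_subtype_le_of_le_of_hasSum {ι : Type*} {p : ι → Prop} {f : Subtype p → ℝ}
    {g : ι → ℝ} {a : ℝ} (hf : ∀ i, 0 ≤ f i) (hg : ∀ i, 0 ≤ g i) (hfg : ∀ i, f i ≤ g i)
    (hga : HasSum g a) : ∑' i, f i ≤ a :=
  hasSum_le_inj Subtype.val Subtype.val_injective (fun c _ => hg c) hfg
    ((hga.summable.subtype p).of_nonneg_of_le hf hfg).hasSum hga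

theorem Psi1_le_general (k D : ℕ) (hk : 3 ≤ k) :
    Psi1 k D ≤ (2 * Real.pi) ^ k * Real.sqrt Real.pi * zetaR ((k : ℝ) - 1 / 2) ^ 2 /
      (Real.sqrt D * Real.Gamma ((k : ℝ) - 1 / 2)) := by
  set ν : ℝ := k - 1 with hν_def
  have hν : 2 ≤ ν := by
    rw [hν_def, le_sub_iff_add_le]; exact_mod_cast hk
  set C := √π * (2 * π) ^ ν / Gamma (ν + 1 / 2) with hC
  have hζ := (hasSum_card_divisors_mul_rpow_neg (s := ν + 1 / 2) (by linarith)).mul_left C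
  calc Psi1 k D ≤ 2 * π * (D : ℝ) ^ (-(1 / 2) : ℝ) * (C * zetaR (ν + 1 / 2) ^ 2) := by
        rw [Psi1]
        gcongr
        refine tsum_subtype_le_of_le_of_hasSum (fun _ => by positivity)
          (fun _ => by positivity) (fun ℓ => ?_) hζ
        exact rpow_neg_half_mul_abs_besselJ_le (by linarith) (by exact_mod_cast ℓ.2.1)
          (by positivity)
    _ = _ := by
        rw [show (k : ℝ) - 1 / 2 = ν + 1 / 2 by ring, rpow_neg D.cast_nonneg, ← sqrt_eq_rpow,
          hC, hν_def, rpow_sub_one (by positivity), rpow_natCast]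
        field_simp

/-- For every integer `k ≥ 3` and positive integer `D`:
`Ψ_k^1(D) ≤ (2π)^k √π ζ(k−1/2)² / (√D Γ(k−1/2))`. -/
theorem Psi1_le (k D : ℕ) (hk : 3 ≤ k) (hD : 0 < D) :
    Psi1 k D ≤ (2 * Real.pi) ^ k * Real.sqrt Real.pi * zetaR ((k : ℝ) - 1 / 2) ^ 2 /
      (Real.sqrt D * Real.Gamma ((k : ℝ) - 1 / 2)) :=
  Psi1_le_general k D hk
end
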